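/- arXiv:1904.08018 — 4 statements merged into one kernel-verified Lean document; each statement's English description precedes it below -/
import Mathlib

section
/- Suppose n ≤ p < ∞, X ∈ ℝ^{n×p}, the matrix XXᵀ ∈ ℝ^{n×n} is invertible, λ > 0, and (β̂, s) ∈ ℝ^p × ℝ^p satisfies the KKT condition for the weighted lasso with response y ∈ ℝ^n. Then y is uniquely recovered from (β̂, s) via y = Xβ̂ + nλ · (XXᵀ)⁻¹ X (W s), where W s = (w_1 s_1, …, w_p s_p). Moreover, writing A = supp(β̂) and I = Aᶜ, this equals X_A β̂_A + nλ · (XXᵀ)⁻¹ X v where v_j = w_j · sgn(β̂_j) for j ∈ A and v_j = w_j s_j for j ∈ I. -/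
open Matrix Finset

/-- The KKT condition for the weighted lasso:
`(1/n) Xᵀ (y - X β̂) = λ W s`, with `sᵢ = sgn(β̂ᵢ)` whenever `β̂ᵢ ≠ 0`
and `|sᵢ| ≤ 1` for all `i`. -/
def lassoKKT (n p : ℕ) (X : Matrix (Fin n) (Fin p) ℝ)
    (y : Fin n → ℝ) (lam : ℝ) (w : Fin p → ℝ) (βhat s : Fin p → ℝ) : Prop :=
  ((1 / (n : ℝ)) • Xᵀ.mulVec (y - X.mulVec βhat) = lam • fun i => w i * s i) ∧
  (∀ i, βhat i ≠ 0 → s i = Real.sign (βhat i)) ∧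
  (∀ i, |s i| ≤ 1)

/-- If `X Xᵀ` is invertible and `(β̂, s)` satisfies the KKT condition for the
weighted lasso, then `y` is uniquely recovered from `(β̂, s)` via
`y = X β̂ + nλ (X Xᵀ)⁻¹ X (W s)`; moreover, with `A = supp β̂` this equals
`X_A β̂_A + nλ (X Xᵀ)⁻¹ X v` where `vⱼ = wⱼ sgn(β̂ⱼ)` on `A` and `vⱼ = wⱼ sⱼ`
off `A`. -/
theorem stmt_5 (n p : ℕ) (hn : 1 ≤ n) (hnp : n ≤ p)
    (X : Matrix (Fin n) (Fin p) ℝ) (hX : IsUnit (X * Xᵀ))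
    (y : Fin n → ℝ) (lam : ℝ) (hlam : 0 < lam) (w : Fin p → ℝ) (hw : ∀ i, 0 < w i)
    (βhat s : Fin p → ℝ) (hKKT : lassoKKT n p X y lam w βhat s) :
    y = X.mulVec βhat
        + ((n : ℝ) * lam) • ((X * Xᵀ)⁻¹ * X).mulVec (fun i => w i * s i) ∧
    y = X.mulVec (fun j => if βhat j ≠ 0 then βhat j else 0)
        + ((n : ℝ) * lam) • ((X * Xᵀ)⁻¹ * X).mulVec
            (fun j => if βhat j ≠ 0 then w j * Real.sign (βhat j) else w j * s j) := by
  obtain ⟨h1, h2, h3⟩ := hKKT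
  have hn0 : (n : ℝ) ≠ 0 := by positivity
  have h1' : Xᵀ.mulVec (y - X.mulVec βhat)
      = ((n : ℝ) * lam) • fun i => w i * s i := by
    have := congrArg (fun v => (n : ℝ) • v) h1
    simpa [smul_smul, hn0, mul_comm, mul_assoc] using this
  have hinv : (X * Xᵀ)⁻¹ * (X * Xᵀ) = 1 := nonsing_inv_mul _ (isUnit_iff_isUnit_det _ |>.mp hX)
  have key : y = X.mulVec βhat
      + ((n : ℝ) * lam) • ((X * Xᵀ)⁻¹ * X).mulVec (fun i => w i * s i) := by
    have h4 : ((X * Xᵀ)⁻¹ * X).mulVec (Xᵀ.mulVec (y - X.mulVec βhat))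
        = ((n : ℝ) * lam) • ((X * Xᵀ)⁻¹ * X).mulVec (fun i => w i * s i) := by
      rw [h1', mulVec_smul]
    rw [mulVec_mulVec, Matrix.mul_assoc, hinv] at h4
    -- h4 : 1.mulVec (y - Xβ) = ...
    rw [show ((1 : Matrix (Fin n) (Fin n) ℝ)).mulVec (y - X.mulVec βhat) = y - X.mulVec βhat from one_mulVec _] at h4
    rw [← h4]
    abel
  refine ⟨key, ?_⟩
  have e1 : (fun j => if βhat j ≠ 0 then βhat j else 0) = βhat := by
    funext j; by_cases h : βhat j = 0 <;> simp [h]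
  have e2 : (fun j => if βhat j ≠ 0 then w j * Real.sign (βhat j) else w j * s j)
      = fun i => w i * s i := by
    funext j; by_cases h : βhat j = 0 <;> simp [h, h2 j]
  rw [e1, e2]; exact key
end

section
/- Let (Ω, F, P) be a probability space, X ∈ ℝ^{n×p} with XXᵀ invertible, λ > 0, positive weights w_1,…,w_p, and let y : Ω → ℝ^n and (β̂, s) : Ω → ℝ^p × ℝ^p be measurable maps such that for every ω, the pair (β̂(ω), s(ω)) satisfies the KKT condition for the weighted lasso with response y(ω). Fix A ⊆ {1,…,p} and let E = {ω : supp(β̂(ω)) = A}, assuming P(E) > 0. Then the conditional distribution of y given E equals the conditional distribution given E of the random vector X_A β̂_A + nλ · (XXᵀ)⁻¹ X (W_A sgn(β̂_A) + W_I s_I), where I = Aᶜ, W_A sgn(β̂_A) + W_I s_I denotes the p-vector whose j-th entry is w_j sgn(β̂_j) for j ∈ A and w_j s_j for j ∈ I; that is, the pushforward measures of P(· | E) under the two maps coincide. -/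
/-!
Since `X Xᵀ` is invertible, `(X Xᵀ)⁻¹ X` is a left inverse of `Xᵀ`, so the KKT stationarity
equation `Xᵀ (y - X β̂) = nλ W s` can be solved for the residual: `y` is a deterministic function
of `(β̂, s)`. On `E` the subgradient `s` agrees with `sgn β̂` on `A = supp β̂`, so that function is
the one in the statement; hence both maps agree `P[|E]`-almost surely and have the same law.
-/

open Matrix MeasureTheory ProbabilityTheory Classical

theorem Matrix.eq_inv_mul_mulVec_of_transpose_mulVec_eq {m k R : Type*} [Fintype m]
    [DecidableEq m] [Fintype k] [CommRing R] {X : Matrix m k R} (hX : IsUnit (X * Xᵀ))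
    {r : m → R} {v : k → R} (h : Xᵀ *ᵥ r = v) : r = ((X * Xᵀ)⁻¹ * X) *ᵥ v := by
  rw [← h, mulVec_mulVec, Matrix.mul_assoc,
    nonsing_inv_mul _ ((isUnit_iff_isUnit_det _).mp hX), one_mulVec]

theorem measurableSet_setOf_support_eq {Ω ι M : Type*} [MeasurableSpace Ω] [Countable ι]
    [Zero M] [MeasurableSpace M] [MeasurableSingletonClass M] {f : Ω → ι → M}
    (hf : Measurable f) (A : Set ι) : MeasurableSet {ω | Function.support (f ω) = A} := by
  have hpi : {v : ι → M | Function.support v = A} =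
      Set.univ.pi fun j => if j ∈ A then {0}ᶜ else {0} := by
    ext v
    simp only [Set.mem_ofPred_eq, Set.ext_iff, Function.mem_support, Set.mem_univ_pi]
    refine forall_congr' fun j => ?_
    split_ifs with hj <;> simp [hj]
  refine hf (hpi ▸ MeasurableSet.univ_pi fun j => ?_ : MeasurableSet {v : ι → M | _})
  split_ifs
  · exact (measurableSet_singleton 0).compl
  · exact measurableSet_singleton 0

namespace lassoKKT

variable {n p : ℕ} {X : Matrix (Fin n) (Fin p) ℝ} {y : Fin n → ℝ} {lam : ℝ} {w : Fin p → ℝ}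
  {βhat s : Fin p → ℝ}

theorem response_eq (h : lassoKKT n p X y lam w βhat s) (hn : n ≠ 0)
    (hX : IsUnit (X * Xᵀ)) :
    y = X *ᵥ βhat + ((n : ℝ) * lam) • ((X * Xᵀ)⁻¹ * X) *ᵥ fun i => w i * s i := by
  have hres : Xᵀ *ᵥ (y - X *ᵥ βhat) = ((n : ℝ) * lam) • fun i => w i * s i := by
    rw [mul_smul, ← h.1, smul_smul, mul_one_div_cancel (Nat.cast_ne_zero.mpr hn), one_smul]
  rw [← mulVec_smul, ← eq_inv_mul_mulVec_of_transpose_mulVec_eq hX hres, add_sub_cancel]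

theorem weighted_sign_eq (h : lassoKKT n p X y lam w βhat s) {A : Set (Fin p)}
    (hA : Function.support βhat = A) :
    (fun j => if j ∈ A then w j * Real.sign (βhat j) else w j * s j) = fun j => w j * s j := by
  funext j
  split_ifs with hj
  · rw [← hA] at hj
    rw [h.2.1 j hj]
  · rfl

end lassoKKT

theorem stmt_7_general {Ω : Type*} [MeasurableSpace Ω] (P : Measure Ω) [IsProbabilityMeasure P]
    (n p : ℕ) (hn : 1 ≤ n)
    (X : Matrix (Fin n) (Fin p) ℝ) (hX : IsUnit (X * Xᵀ))
    (lam : ℝ) (w : Fin p → ℝ)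
    (y : Ω → Fin n → ℝ) (βhat s : Ω → Fin p → ℝ)
    (hβ : Measurable βhat)
    (hKKT : ∀ ω, lassoKKT n p X (y ω) lam w (βhat ω) (s ω))
    (A : Set (Fin p))
    (E : Set Ω) (hE : E = {ω | Function.support (βhat ω) = A}) :
    Measure.map y (P[|E]) =
      Measure.map
        (fun ω =>
          X.mulVec (fun j => if βhat ω j ≠ 0 then βhat ω j else 0)
            + ((n : ℝ) * lam) • ((X * Xᵀ)⁻¹ * X).mulVec
                (fun j => if j ∈ A then w j * Real.sign (βhat ω j) else w j * s ω j))
        (P[|E]) := by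
  have hEmeas : MeasurableSet E := hE ▸ measurableSet_setOf_support_eq hβ A
  refine Measure.map_congr ?_
  filter_upwards [ae_cond_mem hEmeas] with ω hω
  rw [hE] at hω
  have hβeq : (fun j => if βhat ω j ≠ 0 then βhat ω j else 0) = βhat ω := by
    funext j
    split_ifs with hj
    · rfl
    · exact (not_not.mp hj).symm
  rw [hβeq, (hKKT ω).weighted_sign_eq hω]
  exact (hKKT ω).response_eq (Nat.one_le_iff_ne_zero.mp hn) hX

/-- Theorem 2, eq. (13): on the lasso selection event `E = {supp β̂ = A}`, the
conditional law of `y` given `E` coincides with the conditional law given `E` of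
`X_A β̂_A + nλ (X Xᵀ)⁻¹ X (W_A sgn(β̂_A) + W_I s_I)`. -/
theorem stmt_7 {Ω : Type*} [MeasurableSpace Ω] (P : Measure Ω) [IsProbabilityMeasure P]
    (n p : ℕ) (hn : 1 ≤ n)
    (X : Matrix (Fin n) (Fin p) ℝ) (hX : IsUnit (X * Xᵀ))
    (lam : ℝ) (hlam : 0 < lam) (w : Fin p → ℝ) (hw : ∀ i, 0 < w i)
    (y : Ω → Fin n → ℝ) (βhat s : Ω → Fin p → ℝ)
    (hy : Measurable y) (hβ : Measurable βhat) (hs : Measurable s)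
    (hKKT : ∀ ω, lassoKKT n p X (y ω) lam w (βhat ω) (s ω))
    (A : Set (Fin p))
    (E : Set Ω) (hE : E = {ω | Function.support (βhat ω) = A})
    (hPE : 0 < P E) :
    Measure.map y (P[|E]) =
      Measure.map
        (fun ω =>
          X.mulVec (fun j => if βhat ω j ≠ 0 then βhat ω j else 0)
            + ((n : ℝ) * lam) • ((X * Xᵀ)⁻¹ * X).mulVec
                (fun j => if j ∈ A then w j * Real.sign (βhat ω j) else w j * s ω j))
        (P[|E]) :=
  stmt_7_general P n p hn X hX lam w y βhat s hβ hKKT A E hE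
end

section
/- Let (Ω, F, P) be a probability space, X ∈ ℝ^{n×p}, λ > 0, positive weights w_1,…,w_p, and let y : Ω → ℝ^n and (β̂, s) : Ω → ℝ^p × ℝ^p be measurable maps such that for every ω the pair (β̂(ω), s(ω)) satisfies the KKT condition for the weighted lasso with response y(ω). Fix A ⊆ {1,…,p} with X_AᵀX_A invertible, and let E = {ω : supp(β̂(ω)) = A}, assuming P(E) > 0. Then the conditional distribution given E of (X_AᵀX_A)⁻¹X_Aᵀ y equals the conditional distribution given E of β̂_A + nλ · (X_AᵀX_A)⁻¹ W_{AA} sgn(β̂_A), where W_{AA} = diag(w_j : j ∈ A). -/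
open Matrix MeasureTheory ProbabilityTheory

/-- Theorem 2, eq. (14): on the lasso selection event `E = {supp β̂ = A}`, the
conditional law of `X_A⁺ y = (X_Aᵀ X_A)⁻¹ X_Aᵀ y` given `E` coincides with the
conditional law given `E` of `β̂_A + nλ (X_Aᵀ X_A)⁻¹ W_AA sgn(β̂_A)`. -/
theorem stmt_8 {Ω : Type*} [MeasurableSpace Ω] (P : Measure Ω) [IsProbabilityMeasure P]
    (n p : ℕ) (hn : 1 ≤ n)
    (X : Matrix (Fin n) (Fin p) ℝ)
    (lam : ℝ) (hlam : 0 < lam) (w : Fin p → ℝ) (hw : ∀ i, 0 < w i)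
    (y : Ω → Fin n → ℝ) (βhat s : Ω → Fin p → ℝ)
    (hy : Measurable y) (hβ : Measurable βhat) (hs : Measurable s)
    (hKKT : ∀ ω, lassoKKT n p X (y ω) lam w (βhat ω) (s ω))
    (A : Finset (Fin p))
    (XA : Matrix (Fin n) {j // j ∈ A} ℝ) (hXA : ∀ i (j : {j // j ∈ A}), XA i j = X i j.1)
    (hinv : IsUnit (XAᵀ * XA))
    (E : Set Ω) (hE : E = {ω | ∀ j, βhat ω j ≠ 0 ↔ j ∈ A})
    (hPE : 0 < P E) :
    Measure.map (fun ω => (XAᵀ * XA)⁻¹.mulVec (XAᵀ.mulVec (y ω))) (P[|E]) =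
      Measure.map
        (fun ω =>
          (fun j : {j // j ∈ A} => βhat ω j.1)
            + ((n : ℝ) * lam) • ((XAᵀ * XA)⁻¹ * Matrix.diagonal
                (fun j : {j // j ∈ A} => w j.1)).mulVec
                (fun j : {j // j ∈ A} => Real.sign (βhat ω j.1)))
        (P[|E]) := by
  subst hE
  have hdet : IsUnit (XAᵀ * XA).det := (Matrix.isUnit_iff_isUnit_det _).mp hinv
  have hnne : (n : ℝ) ≠ 0 := by positivity
  have hEmeas : MeasurableSet {ω | ∀ j, βhat ω j ≠ 0 ↔ j ∈ A} := by
    have : {ω | ∀ j, βhat ω j ≠ 0 ↔ j ∈ A} = ⋂ j, {ω | βhat ω j ≠ 0 ↔ j ∈ A} := by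
      ext ω; simp
    rw [this]
    refine MeasurableSet.iInter fun j => ?_
    have hm : Measurable fun ω => βhat ω j := (measurable_pi_apply j).comp hβ
    by_cases hj : j ∈ A
    · simp only [hj, iff_true]
      exact (hm (measurableSet_singleton 0)).compl
    · simp only [hj, iff_false, not_not]
      exact hm (measurableSet_singleton 0)
  apply Measure.map_congr
  rw [ProbabilityTheory.cond]
  refine Measure.ae_smul_measure ?_ _
  rw [ae_restrict_iff' hEmeas]
  filter_upwards with ω hω
  set b : {j // j ∈ A} → ℝ := fun j => βhat ω j.1 with hb
  -- X β̂ = XA b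
  have hXb : X.mulVec (βhat ω) = XA.mulVec b := by
    funext i
    simp only [Matrix.mulVec, dotProduct, hXA, hb]
    rw [Finset.sum_coe_sort A (fun j => X i j * βhat ω j)]
    refine (Finset.sum_subset (Finset.subset_univ A) fun j _ hj => ?_).symm
    have : βhat ω j = 0 := by
      by_contra h; exact hj ((hω j).mp h)
    simp [this]
  have hsub : ∀ v : Fin n → ℝ, XAᵀ.mulVec v = fun j => Xᵀ.mulVec v j.1 := by
    intro v; funext j
    simp only [Matrix.mulVec, dotProduct, Matrix.transpose_apply, hXA]
  have key : XAᵀ.mulVec (y ω) =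
      (XAᵀ * XA).mulVec b + ((n : ℝ) * lam) • fun j => w j.1 * Real.sign (b j) := by
    funext j
    have h1 := congrFun (hKKT ω).1 j.1
    simp only [Pi.smul_apply, smul_eq_mul] at h1
    have hsgn : s ω j.1 = Real.sign (βhat ω j.1) :=
      (hKKT ω).2.1 j.1 ((hω j.1).mpr j.2)
    have h2 : Xᵀ.mulVec (y ω - X.mulVec (βhat ω)) j.1
        = (n : ℝ) * lam * (w j.1 * Real.sign (b j)) := by
      rw [hb]
      field_simp at h1
      rw [h1, hsgn]; ring
    rw [Matrix.mulVec_sub, Pi.sub_apply] at h2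
    have h3 : (XAᵀ * XA).mulVec b = XAᵀ.mulVec (X.mulVec (βhat ω)) := by
      rw [hXb, ← Matrix.mulVec_mulVec]
    rw [Pi.add_apply, h3, hsub (y ω), hsub (X.mulVec (βhat ω)), Pi.smul_apply,
      smul_eq_mul]
    linarith [h2]
  rw [key, Matrix.mulVec_add, Matrix.mulVec_smul, Matrix.mulVec_mulVec,
    Matrix.nonsing_inv_mul _ hdet, Matrix.one_mulVec]
  congr 1
  rw [← Matrix.mulVec_mulVec]
  have hd : (Matrix.diagonal fun j : {j // j ∈ A} => w j.1) *ᵥ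
      (fun j => Real.sign (βhat ω j.1)) = fun j => w j.1 * Real.sign (b j) := by
    funext j; rw [Matrix.mulVec_diagonal]
  rw [hd]
end

section
/- Let p > n ≥ 1, let X ∈ ℝ^{n×p} have rank n and suppose every n columns of X are linearly independent. Let V_N ∈ ℝ^{p×(p−n)} be a matrix whose columns form a basis of the null space of X (i.e., the linear map c ↦ V_N c is injective with range equal to {v ∈ ℝ^p : Xv = 0}). Let w_1,…,w_p > 0, let A ⊆ {1,…,p} with |A| = q ≤ n, and let I = Aᶜ. Denote by V_{IN} ∈ ℝ^{|I|×(p−n)} the submatrix of rows of V_N indexed by I and by W_{II} = diag(w_j : j ∈ I). Then the kernel of the linear map ℝ^{|I|} → ℝ^{p−n}, s ↦ V_{IN}ᵀ W_{II} s, has dimension exactly n − q. -/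
open Matrix

/-- Dimension count for the free coordinates of the subgradient: if `X` has
rank `n`, every `n` columns of `X` are linearly independent, the columns of
`V_N` form a basis of `null(X)`, and `|A| = q ≤ n`, then the kernel of
`s ↦ V_{IN}ᵀ W_{II} s` (with `I = Aᶜ`) has dimension exactly `n - q`. -/
theorem stmt_10 (n p : ℕ) (hn : 1 ≤ n) (hnp : n < p)
    (X : Matrix (Fin n) (Fin p) ℝ) (hrank : X.rank = n)
    (hcols : ∀ A : Finset (Fin p), A.card = n →
      LinearIndependent ℝ (fun j : {j // j ∈ A} => Xᵀ j.1))
    (VN : Matrix (Fin p) (Fin (p - n)) ℝ)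
    (hVNinj : Function.Injective VN.mulVec)
    (hVNrange : ∀ v : Fin p → ℝ, X.mulVec v = 0 ↔ ∃ c, VN.mulVec c = v)
    (w : Fin p → ℝ) (hw : ∀ j, 0 < w j)
    (A : Finset (Fin p)) (q : ℕ) (hq : A.card = q) (hqn : q ≤ n) :
    Module.finrank ℝ
      (LinearMap.ker
        ((Matrix.of (fun (j : {j // j ∈ Aᶜ}) (c : Fin (p - n)) => VN j.1 c))ᵀ *
            Matrix.diagonal (fun j : {j // j ∈ Aᶜ} => w j.1)).mulVecLin) = n - q := by
  classical
  set B : Matrix {j // j ∈ Aᶜ} (Fin (p - n)) ℝ :=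
    Matrix.of (fun (j : {j // j ∈ Aᶜ}) (c : Fin (p - n)) => VN j.1 c) with hB
  -- Step 1: B has trivial kernel
  have hkey : ∀ c : Fin (p - n) → ℝ, B.mulVec c = 0 → c = 0 := by
    intro c hc
    obtain ⟨A', hAA', -, hA'⟩ := Finset.exists_subsuperset_card_eq (A.subset_univ)
      (by simpa [hq] using hqn) (by simpa using hnp.le)
    set v : Fin p → ℝ := VN.mulVec c with hv
    have hvI : ∀ j, j ∉ A' → v j = 0 := by
      intro j hj
      have hjc : j ∈ Aᶜ := Finset.mem_compl.2 fun h => hj (hAA' h)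
      have := congrFun hc ⟨j, hjc⟩
      simpa [hB, Matrix.mulVec, dotProduct, hv] using this
    have hXv : X.mulVec v = 0 := (hVNrange v).2 ⟨c, rfl⟩
    have hli := hcols A' hA'
    rw [Fintype.linearIndependent_iff] at hli
    have hsum : ∑ j : {j // j ∈ A'}, v j.1 • (Xᵀ j.1) = 0 := by
      funext i
      have h1 : (∑ j : {j // j ∈ A'}, v j.1 • (Xᵀ j.1)) i
          = ∑ j ∈ A', v j * X i j := by
        rw [Finset.sum_apply]
        rw [← Finset.sum_coe_sort A' (fun j => v j * X i j)]
        simp [Matrix.transpose_apply, smul_eq_mul]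
      have h2 : ∑ j ∈ A', v j * X i j = ∑ j : Fin p, v j * X i j := by
        apply Finset.sum_subset (A'.subset_univ)
        intro j _ hj
        simp [hvI j hj]
      have h3 : ∑ j : Fin p, v j * X i j = X.mulVec v i := by
        simp [Matrix.mulVec, dotProduct, mul_comm]
      rw [h1, h2, h3, hXv]
    have hv0 : v = 0 := by
      funext j
      by_cases hj : j ∈ A'
      · simpa using hli (fun j => v j.1) hsum ⟨j, hj⟩
      · simp [hvI j hj]
    have : VN.mulVec c = VN.mulVec 0 := by
      rw [← hv, hv0]; simp
    exact hVNinj this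
  -- Step 2: rank computations
  have hcard : Fintype.card {j // j ∈ Aᶜ} = p - q := by
    simp [Finset.card_compl, hq]
  have hBrank : B.rank = p - n := by
    have hker : LinearMap.ker B.mulVecLin = ⊥ := by
      rw [LinearMap.ker_eq_bot']
      intro c hc
      exact hkey c (by simpa [Matrix.mulVecLin_apply] using hc)
    have := LinearMap.finrank_range_add_finrank_ker B.mulVecLin
    rw [hker, finrank_bot, add_zero] at this
    simpa [Matrix.rank, Module.finrank_pi] using this
  set M := Bᵀ * Matrix.diagonal (fun j : {j // j ∈ Aᶜ} => w j.1) with hM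
  have hMrank : M.rank = p - n := by
    rw [hM, Matrix.rank_mul_eq_left_of_isUnit_det _ _ (by
      simp only [Matrix.det_diagonal]
      exact isUnit_iff_ne_zero.2 (Finset.prod_ne_zero_iff.2 fun j _ => (hw j.1).ne'))]
    rw [Matrix.rank_transpose]
    exact hBrank
  have hrn := LinearMap.finrank_range_add_finrank_ker M.mulVecLin
  have hdom : Module.finrank ℝ ({j // j ∈ Aᶜ} → ℝ) = p - q := by
    rw [Module.finrank_pi, hcard]
  rw [hdom] at hrn
  have hMrank' : Module.finrank ℝ (LinearMap.range M.mulVecLin) = p - n := hMrank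
  rw [hMrank'] at hrn
  omega
end
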